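/- For a Reed–Solomon code (n, k, t)_{2^m} with t = ⌊(n−k)/2⌋, if at most t of the n encoded symbols in E' differ from the encoded codeword E = encode(K), then decode(E') = K. -/

import Mathlib

theorem eq_of_hammingDist_le_of_two_mul_lt {ι α β : Type*} [Fintype ι] [DecidableEq β]
    (encode : α → ι → β) {d t : ℕ}
    (hmin : ∀ a a', a ≠ a' → d ≤ hammingDist (encode a) (encode a')) (hdt : 2 * t < d)
    {a b : α} {y : ι → β} (ha : hammingDist (encode a) y ≤ t)
    (hb : hammingDist (encode b) y ≤ t) : a = b := by
  by_contra hne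
  have hab : hammingDist (encode a) (encode b) ≤ 2 * t :=
    calc hammingDist (encode a) (encode b)
        ≤ hammingDist (encode a) y + hammingDist y (encode b) := hammingDist_triangle _ _ _
      _ ≤ 2 * t := by rw [hammingDist_comm y]; omega
  exact absurd (hmin a b hne) (by omega)

theorem reedSolomon_decode_correct_general {F : Type*} [DecidableEq F]
    (n k : ℕ)
    (encode : (Fin k → F) → Fin n → F) (decode : (Fin n → F) → Fin k → F)
    (hMDS : ∀ K K' : Fin k → F, K ≠ K' → n - k + 1 ≤ hammingDist (encode K) (encode K'))
    (hnearest : ∀ (E' : Fin n → F) (K' : Fin k → F),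
      hammingDist (encode (decode E')) E' ≤ hammingDist (encode K') E')
    (t : ℕ) (ht : t = (n - k) / 2)
    (K : Fin k → F) (E' : Fin n → F)
    (hE : hammingDist (encode K) E' ≤ t) :
    decode E' = K :=
  eq_of_hammingDist_le_of_two_mul_lt encode hMDS (by omega) ((hnearest E' K).trans hE) hE

/-- For a Reed–Solomon code over `GF(2^m)` mapping `k` symbols to `n` symbols
(`k ≤ n ≤ 2^m`) with the MDS property (minimum distance `n - k + 1`) and
nearest-codeword decoding, if at most `t = ⌊(n-k)/2⌋` of the `n` symbols of `E'`
differ from `encode K`, then `decode E' = K`. -/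
theorem reedSolomon_decode_correct {F : Type*} [Field F] [Fintype F] [DecidableEq F]
    (m n k : ℕ) (hcard : Fintype.card F = 2 ^ m) (hkn : k ≤ n) (hn : n ≤ 2 ^ m)
    (encode : (Fin k → F) → Fin n → F) (decode : (Fin n → F) → Fin k → F)
    (hMDS : ∀ K K' : Fin k → F, K ≠ K' → n - k + 1 ≤ hammingDist (encode K) (encode K'))
    (hnearest : ∀ (E' : Fin n → F) (K' : Fin k → F),
      hammingDist (encode (decode E')) E' ≤ hammingDist (encode K') E')
    (t : ℕ) (ht : t = (n - k) / 2)
    (K : Fin k → F) (E' : Fin n → F)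
    (hE : hammingDist (encode K) E' ≤ t) :
    decode E' = K :=
  reedSolomon_decode_correct_general n k encode decode hMDS hnearest t ht K E' hE
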